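/- Let q ∈ ℂ, q ≠ 0, and let f, P ∈ ℂ((x)) with P ≠ 0 satisfy x σ_q(f) + f = P. Define P_j = ∑_{k=0}^{j-1}(−x σ_q)ᵏ P with P₀ = 0, and A_{k;j} = ∏_{ℓ≠j, 0≤ℓ≤k}(P_j − P_ℓ). Then x σ_q(f − P_j) = −(f − P_{j+1}) and x^k σ_q(A_{k;j}) = (−1)ᵏ A_{k+1;j+1} / P_{j+1} for all 0 ≤ j ≤ k. -/

import Mathlib

noncomputable section

/-- The `q`-dilation operator `σ_q` on formal Laurent series: `(σ_q f)(x) = f(qx)`,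
i.e. the coefficient of `xⁿ` is multiplied by `qⁿ`. -/
def sigmaq (q : ℂ) (f : LaurentSeries ℂ) : LaurentSeries ℂ :=
  ⟨fun n => q ^ n * f.coeff n,
    f.isPWO_support'.mono (by
      intro n hn
      simp only [Function.mem_support] at hn ⊢
      exact fun h => hn (by rw [h, mul_zero]))⟩

/-- `x` as a Laurent series. -/
def Xl : LaurentSeries ℂ := HahnSeries.single 1 1

/-- `P_n = ∑_{k=0}^{n-1} (−x σ_q)ᵏ P` (so `P₀ = 0`). -/
def Pq (q : ℂ) (P : LaurentSeries ℂ) (n : ℕ) : LaurentSeries ℂ :=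
  ∑ k ∈ Finset.range n, (fun g => -Xl * sigmaq q g)^[k] P

/-- `A_{k;j} = ∏_{ℓ≠j, 0≤ℓ≤k} (P_j − P_ℓ)`. -/
def Akj (q : ℂ) (P : LaurentSeries ℂ) (k j : ℕ) : LaurentSeries ℂ :=
  ∏ ℓ ∈ (Finset.range (k + 1)).erase j, (Pq q P j - Pq q P ℓ)

lemma sigmaq_coeff (q : ℂ) (f : LaurentSeries ℂ) (n : ℤ) :
    (sigmaq q f).coeff n = q ^ n * f.coeff n := rfl

lemma sigmaq_support (q : ℂ) (hq : q ≠ 0) (f : LaurentSeries ℂ) :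
    (sigmaq q f).support = f.support := by
  ext n
  simp [HahnSeries.mem_support, sigmaq_coeff, mul_eq_zero, zpow_ne_zero n hq]

lemma sigmaq_add (q : ℂ) (a b : LaurentSeries ℂ) :
    sigmaq q (a + b) = sigmaq q a + sigmaq q b := by
  ext n
  simp [sigmaq_coeff]
  ring

lemma sigmaq_mul (q : ℂ) (hq : q ≠ 0) (a b : LaurentSeries ℂ) :
    sigmaq q (a * b) = sigmaq q a * sigmaq q b := by
  ext n
  rw [sigmaq_coeff, HahnSeries.coeff_mul, HahnSeries.coeff_mul, Finset.mul_sum]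
  have hset : Finset.antidiagonal (sigmaq q a).isPWO_support (sigmaq q b).isPWO_support n
      = Finset.antidiagonal a.isPWO_support b.isPWO_support n := by
    ext ij
    rw [Finset.mem_addAntidiagonal, Finset.mem_addAntidiagonal,
      sigmaq_support q hq a, sigmaq_support q hq b]
  rw [hset]
  refine Finset.sum_congr rfl fun ij hij => ?_
  rw [Finset.mem_addAntidiagonal] at hij
  rw [sigmaq_coeff, sigmaq_coeff, ← hij.2.2, zpow_add₀ hq]
  ring

def sigmaqRingHom (q : ℂ) (hq : q ≠ 0) : LaurentSeries ℂ →+* LaurentSeries ℂ where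
  toFun := sigmaq q
  map_one' := by
    ext n
    rw [sigmaq_coeff]
    by_cases h : n = 0 <;> simp [HahnSeries.coeff_one, h]
  map_mul' := sigmaq_mul q hq
  map_zero' := by ext n; simp [sigmaq_coeff]
  map_add' := sigmaq_add q

lemma Xl_mul_coeff (g : LaurentSeries ℂ) (n : ℤ) : (Xl * g).coeff n = g.coeff (n - 1) := by
  have h := HahnSeries.coeff_single_mul_add (r := (1 : ℂ)) (x := g) (a := n - 1) (b := (1 : ℤ))
  simpa [Xl] using h

lemma iter_coeff_zero (q : ℂ) (P : LaurentSeries ℂ) (hP : P ≠ 0) (k : ℕ) :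
    ∀ n : ℤ, n < P.order + k → ((fun g => -Xl * sigmaq q g)^[k] P).coeff n = 0 := by
  induction k with
  | zero =>
      intro n hn
      exact HahnSeries.coeff_eq_zero_of_lt_order (by simpa using hn)
  | succ k ih =>
      intro n hn
      rw [Function.iterate_succ_apply']
      beta_reduce
      rw [show -Xl * sigmaq q ((fun g => -Xl * sigmaq q g)^[k] P)
          = -(Xl * sigmaq q ((fun g => -Xl * sigmaq q g)^[k] P)) from by ring,
        HahnSeries.coeff_neg, Xl_mul_coeff, sigmaq_coeff,
        ih (n - 1) (by push_cast at hn ⊢; omega), mul_zero, neg_zero]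

lemma Pq_succ_ne_zero (q : ℂ) (P : LaurentSeries ℂ) (hP : P ≠ 0) (j : ℕ) :
    Pq q P (j + 1) ≠ 0 := by
  intro h
  have hc : (Pq q P (j + 1)).coeff P.order = P.coeff P.order := by
    rw [Pq]
    have hms : (∑ k ∈ Finset.range (j+1), (fun g => -Xl * sigmaq q g)^[k] P).coeff P.order
        = ∑ k ∈ Finset.range (j+1), ((fun g => -Xl * sigmaq q g)^[k] P).coeff P.order :=
      map_sum (HahnSeries.coeff.addMonoidHom P.order) _ _
    rw [hms]
    rw [Finset.sum_eq_single_of_mem 0 (Finset.mem_range.2 (Nat.succ_pos j))]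
    · simp
    · intro b _ hb
      exact iter_coeff_zero q P hP b P.order (by
        have : (0:ℤ) < b := by exact_mod_cast Nat.pos_of_ne_zero hb
        omega)
  rw [h] at hc
  exact (mt HahnSeries.coeff_order_eq_zero.mp hP) (by simpa using hc.symm)

lemma Xl_sigmaq_Pq (q : ℂ) (hq : q ≠ 0) (P : LaurentSeries ℂ) (m : ℕ) :
    Xl * sigmaq q (Pq q P m) = P - Pq q P (m + 1) := by
  have hhom : sigmaq q (Pq q P m)
      = ∑ k ∈ Finset.range m, sigmaq q ((fun g => -Xl * sigmaq q g)^[k] P) := by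
    rw [Pq]
    exact map_sum (sigmaqRingHom q hq) _ _
  rw [hhom, Finset.mul_sum]
  have hterm : ∀ k, Xl * sigmaq q ((fun g => -Xl * sigmaq q g)^[k] P)
      = -((fun g => -Xl * sigmaq q g)^[k+1] P) := by
    intro k
    rw [Function.iterate_succ_apply']
    beta_reduce
    ring
  rw [Finset.sum_congr rfl fun k _ => hterm k]
  rw [Pq, Finset.sum_range_succ']
  beta_reduce
  rw [Function.iterate_zero_apply, Finset.sum_neg_distrib]
  ring

/-- If `x σ_q(f) + f = P`, then for `0 ≤ j ≤ k`:
`x σ_q(f − P_j) = −(f − P_{j+1})` and `x^k σ_q(A_{k;j}) = (−1)ᵏ A_{k+1;j+1} / P_{j+1}`. -/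
theorem sigmaq_shift_identities (q : ℂ) (hq : q ≠ 0) (f P : LaurentSeries ℂ) (hP : P ≠ 0)
    (hf : Xl * sigmaq q f + f = P) (k j : ℕ) (hjk : j ≤ k) :
    Xl * sigmaq q (f - Pq q P j) = -(f - Pq q P (j + 1)) ∧
      Xl ^ k * sigmaq q (Akj q P k j)
        = (-1 : LaurentSeries ℂ) ^ k * Akj q P (k + 1) (j + 1) / Pq q P (j + 1) := by
  have hXf : Xl * sigmaq q f = P - f := eq_sub_of_add_eq hf
  have hsub : ∀ a b : LaurentSeries ℂ, sigmaq q (a - b) = sigmaq q a - sigmaq q b :=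
    fun a b => map_sub (sigmaqRingHom q hq) a b
  have h1 : ∀ m, Xl * sigmaq q (f - Pq q P m) = -(f - Pq q P (m + 1)) := by
    intro m
    rw [hsub, mul_sub, Xl_sigmaq_Pq q hq P m, hXf]
    ring
  refine ⟨h1 j, ?_⟩
  set s := (Finset.range (k + 1)).erase j with hs
  have hjmem : j ∈ Finset.range (k + 1) := Finset.mem_range.2 (Nat.lt_succ_of_le hjk)
  have hcard : s.card = k := by
    rw [hs, Finset.card_erase_of_mem hjmem, Finset.card_range]
    omega
  set t := ((Finset.range (k + 2)).erase (j + 1)).erase 0 with ht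
  have himg : Finset.image (· + 1) s = t := by
    ext m
    simp only [Finset.mem_image, hs, ht, Finset.mem_erase, Finset.mem_range]
    constructor
    · rintro ⟨ℓ, ⟨h1, h2⟩, rfl⟩; omega
    · rintro ⟨h0, h1, h2⟩; exact ⟨m - 1, ⟨by omega, by omega⟩, by omega⟩
  have hprod : ∏ ℓ ∈ s, (Pq q P (j + 1) - Pq q P (ℓ + 1))
      = ∏ m ∈ t, (Pq q P (j + 1) - Pq q P m) := by
    rw [← himg, Finset.prod_image (fun a _ b _ h => by omega)]
  have hA : Akj q P (k + 1) (j + 1)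
      = Pq q P (j + 1) * ∏ m ∈ t, (Pq q P (j + 1) - Pq q P m) := by
    rw [Akj, ← Finset.mul_prod_erase _ _
      (show 0 ∈ (Finset.range (k + 2)).erase (j + 1) from
        Finset.mem_erase.2 ⟨by omega, Finset.mem_range.2 (by omega)⟩), ht]
    congr 1
    simp [Pq]
  calc Xl ^ k * sigmaq q (Akj q P k j)
      = ∏ ℓ ∈ s, (Xl * sigmaq q (Pq q P j - Pq q P ℓ)) := by
        have hpm : sigmaq q (∏ ℓ ∈ s, (Pq q P j - Pq q P ℓ))
            = ∏ ℓ ∈ s, sigmaq q (Pq q P j - Pq q P ℓ) :=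
          map_prod (sigmaqRingHom q hq) _ _
        rw [Akj, ← hs, hpm, Finset.prod_mul_distrib, Finset.prod_const, hcard]
    _ = ∏ ℓ ∈ s, ((-1 : LaurentSeries ℂ) * (Pq q P (j + 1) - Pq q P (ℓ + 1))) := by
        refine Finset.prod_congr rfl fun ℓ _ => ?_
        rw [hsub, mul_sub, Xl_sigmaq_Pq q hq, Xl_sigmaq_Pq q hq]
        ring
    _ = (-1 : LaurentSeries ℂ) ^ k * ∏ ℓ ∈ s, (Pq q P (j + 1) - Pq q P (ℓ + 1)) := by
        rw [Finset.prod_mul_distrib, Finset.prod_const, hcard]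
    _ = (-1 : LaurentSeries ℂ) ^ k * Akj q P (k + 1) (j + 1) / Pq q P (j + 1) := by
        rw [hprod, hA, mul_div_assoc,
          mul_div_cancel_left₀ _ (Pq_succ_ne_zero q P hP (j))]


end
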